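/- Let X be a Banach space and E ⊆ F ⊆ X finite-dimensional subspaces. Define λ(X,F,E) = inf{‖T‖ : T ∈ L(X,F), T|_E = Id_E}. Then λ(X,F,E) = ( inf{ ‖S‖_{ΛX} : S ∈ L(F,E), tr(S|_E) = 1 } )^{−1}, where ‖S‖_{ΛX} is the nuclear norm of the composition of S with the inclusion E ↪ X. -/

import Mathlib

/-!
Write `m` for the infimum of `ν(S)` over `tr (S|_E) = 1`. If `T : X → F` extends `id_E` and
`S = ∑ fᵢ ⊗ xᵢ` as an operator into `X`, then
`1 = tr (S|_E) = tr (T ∘ S) = ∑ fᵢ (T xᵢ) ≤ ‖T‖ ∑ ‖fᵢ‖ ‖xᵢ‖`, so `‖T‖ ≥ m⁻¹`.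

Conversely, `S ↦ m · tr (S|_E)` is dominated by the nuclear seminorm `ν` on the operators
`F → X` with range in `E`, so by Hahn–Banach it extends to a functional `Φ` on all of `L(F, X)`
with `|Φ| ≤ ν`. Since `F` is finite-dimensional, `f (T x) = m⁻¹ Φ (f ⊗ x)` defines an operator
`T : X → F` with `‖T‖ ≤ m⁻¹`, and it extends `id_E` because `Φ (f ⊗ e) = m f(e)` for `e ∈ E`.
-/
/-- The nuclear norm of a (finite-rank) operator, defined as the infimum of
`∑ ‖fᵢ‖ * ‖xᵢ‖` over finite representations `A = ∑ fᵢ ⊗ xᵢ`. -/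
noncomputable def nuclearNorm {F X : Type*} [NormedAddCommGroup F] [NormedSpace ℝ F]
    [NormedAddCommGroup X] [NormedSpace ℝ X] (A : F →L[ℝ] X) : ℝ :=
  sInf {c | ∃ (k : ℕ) (f : Fin k → (F →L[ℝ] ℝ)) (x : Fin k → X),
    (∀ v, A v = ∑ i, f i v • x i) ∧ c = ∑ i, ‖f i‖ * ‖x i‖}

section NuclearNorm

variable {F X : Type*} [NormedAddCommGroup F] [NormedSpace ℝ F]
  [NormedAddCommGroup X] [NormedSpace ℝ X]

lemma nuclearNorm_le_sum {A : F →L[ℝ] X} {k : ℕ} (f : Fin k → F →L[ℝ] ℝ) (x : Fin k → X)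
    (hA : ∀ v, A v = ∑ i, f i v • x i) : nuclearNorm A ≤ ∑ i, ‖f i‖ * ‖x i‖ :=
  csInf_le ⟨0, by rintro _ ⟨k, f, x, -, rfl⟩; positivity⟩ ⟨k, f, x, hA, rfl⟩

lemma nuclearNorm_zero : nuclearNorm (0 : F →L[ℝ] X) = 0 :=
  le_antisymm (by simpa using nuclearNorm_le_sum (A := (0 : F →L[ℝ] X)) ![] ![] (by simp))
    (Real.sInf_nonneg (by rintro _ ⟨k, f, x, -, rfl⟩; positivity))

lemma nuclearNorm_smulRight_le (f : F →L[ℝ] ℝ) (x : X) :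
    nuclearNorm (f.smulRight x) ≤ ‖f‖ * ‖x‖ := by
  simpa using nuclearNorm_le_sum (fun _ : Fin 1 => f) (fun _ => x) (by simp)

variable [FiniteDimensional ℝ F]

lemma le_mul_nuclearNorm {A : F →L[ℝ] X} {a C : ℝ} (hC : 0 ≤ C)
    (h : ∀ (k : ℕ) (f : Fin k → F →L[ℝ] ℝ) (x : Fin k → X),
      (∀ v, A v = ∑ i, f i v • x i) → a ≤ C * ∑ i, ‖f i‖ * ‖x i‖) :
    a ≤ C * nuclearNorm A := by
  have hne : {c | ∃ (k : ℕ) (f : Fin k → (F →L[ℝ] ℝ)) (x : Fin k → X),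
      (∀ v, A v = ∑ i, f i v • x i) ∧ c = ∑ i, ‖f i‖ * ‖x i‖}.Nonempty := by
    let b := Module.finBasis ℝ F
    refine ⟨_, _, fun i => LinearMap.toContinuousLinearMap (b.coord i), fun i => A (b i),
      fun v => ?_, rfl⟩
    conv_lhs => rw [← b.sum_repr v, map_sum]
    simp only [map_smul, LinearMap.coe_toContinuousLinearMap',
      Module.Basis.coord_apply]
  rw [nuclearNorm, ← smul_eq_mul, ← Real.sInf_smul_of_nonneg hC]
  refine le_csInf (hne.smul_set) ?_
  rintro _ ⟨_, ⟨k, f, x, hA, rfl⟩, rfl⟩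
  exact h k f x hA

lemma nuclearNorm_add_le (A B : F →L[ℝ] X) :
    nuclearNorm (A + B) ≤ nuclearNorm A + nuclearNorm B := by
  suffices nuclearNorm (A + B) - nuclearNorm B ≤ 1 * nuclearNorm A by linarith
  refine le_mul_nuclearNorm zero_le_one fun k f x hA => ?_
  suffices nuclearNorm (A + B) - ∑ i, ‖f i‖ * ‖x i‖ ≤ 1 * nuclearNorm B by linarith
  refine le_mul_nuclearNorm zero_le_one fun l g y hB => ?_
  have := nuclearNorm_le_sum (A := A + B) (Fin.append f g) (Fin.append x y)
    (by simp [Fin.sum_univ_add, hA, hB])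
  simp only [Fin.sum_univ_add, Fin.append_left, Fin.append_right] at this
  linarith

lemma nuclearNorm_smul_le (r : ℝ) (A : F →L[ℝ] X) :
    nuclearNorm (r • A) ≤ ‖r‖ * nuclearNorm A := by
  refine le_mul_nuclearNorm (norm_nonneg r) fun k f x hA => ?_
  calc nuclearNorm (r • A) ≤ ∑ i, ‖f i‖ * ‖r • x i‖ :=
        nuclearNorm_le_sum f (fun i => r • x i) fun v => by
          simp [hA, Finset.smul_sum, smul_comm r]
    _ = ‖r‖ * ∑ i, ‖f i‖ * ‖x i‖ := by
        simp only [norm_smul, Finset.mul_sum]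
        exact Finset.sum_congr rfl fun i _ => by ring

variable (F X) in
noncomputable def nuclearSeminorm : Seminorm ℝ (F →L[ℝ] X) :=
  .ofSMulLE nuclearNorm nuclearNorm_zero nuclearNorm_add_le nuclearNorm_smul_le

lemma trace_comp_le_opNorm_mul_nuclearNorm (T : X →L[ℝ] F) (A : F →L[ℝ] X) :
    LinearMap.trace ℝ F (T ∘L A : F →L[ℝ] F) ≤ ‖T‖ * nuclearNorm A := by
  refine le_mul_nuclearNorm (norm_nonneg T) fun k f x hA => ?_
  have hTA : ((T ∘L A : F →L[ℝ] F) : F →ₗ[ℝ] F) = ∑ i, (f i : F →ₗ[ℝ] ℝ).smulRight (T (x i)) := by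
    ext v
    simp [hA]
  rw [hTA, map_sum, Finset.mul_sum]
  refine Finset.sum_le_sum fun i _ => ?_
  rw [LinearMap.trace_smulRight]
  calc f i (T (x i)) ≤ ‖f i‖ * ‖T (x i)‖ := (le_abs_self _).trans ((f i).le_opNorm _)
    _ ≤ ‖f i‖ * (‖T‖ * ‖x i‖) := by gcongr; exact T.le_opNorm _
    _ = ‖T‖ * (‖f i‖ * ‖x i‖) := by ring

end NuclearNorm

section Extension

variable {V W : Type*} [AddCommGroup V] [Module ℝ V] [AddCommGroup W] [Module ℝ W]

lemma Seminorm.mul_le_of_forall_eq_one (φ : V →ₗ[ℝ] ℝ) (p : Seminorm ℝ V) {m : ℝ} (hm : 0 ≤ m)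
    (h : ∀ v, φ v = 1 → m ≤ p v) (v : V) : m * φ v ≤ p v := by
  rcases le_or_gt (φ v) 0 with hv | hv
  · exact (mul_nonpos_of_nonneg_of_nonpos hm hv).trans (apply_nonneg p v)
  · have := h ((φ v)⁻¹ • v) (by rw [map_smul, smul_eq_mul, inv_mul_cancel₀ hv.ne'])
    rw [map_smul_eq_mul, Real.norm_of_nonneg (inv_pos.mpr hv).le] at this
    rwa [le_inv_mul_iff₀ hv, mul_comm] at this

lemma exists_extension_abs_le_of_injective {J : V →ₗ[ℝ] W} (hJ : Function.Injective J)
    (φ : V →ₗ[ℝ] ℝ) (p : Seminorm ℝ W) (h : ∀ v, φ v ≤ p (J v)) :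
    ∃ Φ : W →ₗ[ℝ] ℝ, (∀ v, Φ (J v) = φ v) ∧ ∀ w, |Φ w| ≤ p w := by
  let e := LinearEquiv.ofInjective J hJ
  obtain ⟨Φ, hΦJ, hΦp⟩ := Module.Dual.exists_extension_of_le_seminorm_real (LinearMap.range J)
    (φ ∘ₗ e.symm.toLinearMap) (p := p) fun w => by
      simpa [e, LinearEquiv.ofInjective_apply] using h (e.symm w)
  refine ⟨Φ, fun v => ?_, hΦp⟩
  simpa [e] using hΦJ (e v)

end Extension

section DualOperator

variable {F X : Type*} [NormedAddCommGroup F] [NormedSpace ℝ F] [FiniteDimensional ℝ F]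
  [NormedAddCommGroup X] [NormedSpace ℝ X]

variable (F) in
noncomputable def ofStrongDualDual : ((F →L[ℝ] ℝ) →ₗ[ℝ] ℝ) →ₗ[ℝ] F :=
  (Module.evalEquiv ℝ F).symm.toLinearMap ∘ₗ
    (LinearMap.toContinuousLinearMap : Module.Dual ℝ F ≃ₗ[ℝ] F →L[ℝ] ℝ).toLinearMap.dualMap

@[simp] lemma apply_ofStrongDualDual (ψ : (F →L[ℝ] ℝ) →ₗ[ℝ] ℝ) (f : F →L[ℝ] ℝ) :
    f (ofStrongDualDual F ψ) = ψ f := by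
  change (f : F →ₗ[ℝ] ℝ) _ = _
  rw [ofStrongDualDual, LinearMap.comp_apply, LinearEquiv.coe_coe,
    Module.apply_evalEquiv_symm_apply]
  rfl

lemma exists_opNorm_le_of_abs_le_mul_nuclearNorm (Φ : (F →L[ℝ] X) →ₗ[ℝ] ℝ) {C : ℝ} (hC : 0 ≤ C)
    (hΦ : ∀ A, |Φ A| ≤ C * nuclearNorm A) :
    ∃ T : X →L[ℝ] F, ‖T‖ ≤ C ∧ ∀ (f : F →L[ℝ] ℝ) x, f (T x) = Φ (f.smulRight x) := by
  let T : X →ₗ[ℝ] F := ofStrongDualDual F ∘ₗ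
    ((ContinuousLinearMap.coeLM ℝ ∘ₗ
      (ContinuousLinearMap.smulRightL ℝ F X).toLinearMap).compr₂ Φ).flip
  have hT : ∀ (f : F →L[ℝ] ℝ) x, f (T x) = Φ (f.smulRight x) := by simp [T]
  have hbound : ∀ x, ‖T x‖ ≤ C * ‖x‖ := fun x =>
    NormedSpace.norm_le_dual_bound ℝ _ (by positivity) fun f => by
      calc ‖f (T x)‖ = |Φ (f.smulRight x)| := by rw [hT, Real.norm_eq_abs]
        _ ≤ C * (‖f‖ * ‖x‖) := (hΦ _).trans (by gcongr; exact nuclearNorm_smulRight_le f x)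
        _ = C * ‖x‖ * ‖f‖ := by ring
  exact ⟨T.mkContinuous C hbound, T.mkContinuous_norm_le hC hbound, hT⟩

end DualOperator

lemma Real.sInf_eq_inv_sInf {A B : Set ℝ} (hA : ∀ a ∈ A, 0 ≤ a) (hAne : A.Nonempty)
    (hBne : B.Nonempty) (hAB : ∀ a ∈ A, ∀ b ∈ B, 1 ≤ a * b)
    (hBA : ∀ m, 0 < m → (∀ b ∈ B, m ≤ b) → ∃ a ∈ A, a ≤ m⁻¹) :
    sInf A = (sInf B)⁻¹ := by
  obtain ⟨a₀, ha₀⟩ := hAne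
  obtain ⟨b₀, hb₀⟩ := hBne
  have hApos : ∀ a ∈ A, 0 < a := fun a ha =>
    (hA a ha).lt_of_ne fun h => by
      have := hAB a ha b₀ hb₀
      rw [← h, zero_mul] at this
      norm_num at this
  have hinv_le : ∀ a ∈ A, ∀ b ∈ B, a⁻¹ ≤ b := fun a ha b hb =>
    (inv_le_iff_one_le_mul₀' (hApos a ha)).2 (hAB a ha b hb)
  have hinv_le_sInf : ∀ a ∈ A, a⁻¹ ≤ sInf B := fun a ha =>
    le_csInf ⟨b₀, hb₀⟩ (hinv_le a ha)
  have hm : 0 < sInf B := (inv_pos.2 (hApos a₀ ha₀)).trans_le (hinv_le_sInf a₀ ha₀)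
  obtain ⟨a₁, ha₁, ha₁m⟩ := hBA _ hm fun b hb => csInf_le ⟨a₀⁻¹, hinv_le a₀ ha₀⟩ hb
  refine le_antisymm ((csInf_le ⟨0, hA⟩ ha₁).trans ha₁m) (le_csInf ⟨a₀, ha₀⟩ fun a ha => ?_)
  exact (inv_le_comm₀ (hApos a ha) hm).1 (hinv_le_sInf a ha)

section Subspaces

variable {X : Type*} [NormedAddCommGroup X] [NormedSpace ℝ X] {E F : Submodule ℝ X}
  (hEF : E ≤ F)

noncomputable def traceRestrict : (F →L[ℝ] E) →ₗ[ℝ] ℝ :=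
  LinearMap.trace ℝ E ∘ₗ LinearMap.lcomp ℝ E (Submodule.inclusion hEF) ∘ₗ
    ContinuousLinearMap.coeLM ℝ

lemma traceRestrict_apply (S : F →L[ℝ] E) :
    traceRestrict hEF S = LinearMap.trace ℝ E ((S : F →ₗ[ℝ] E).comp (Submodule.inclusion hEF)) :=
  rfl

lemma traceRestrict_eq_zero [Subsingleton E] (S : F →L[ℝ] E) : traceRestrict hEF S = 0 := by
  rw [traceRestrict_apply, Subsingleton.elim ((S : F →ₗ[ℝ] E) ∘ₗ _) 0, map_zero]

variable [FiniteDimensional ℝ E]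

lemma traceRestrict_smulRight (f : F →L[ℝ] ℝ) (e : E) :
    traceRestrict hEF (f.smulRight e) = f (Submodule.inclusion hEF e) :=
  LinearMap.trace_smulRight ((f : F →ₗ[ℝ] ℝ) ∘ₗ Submodule.inclusion hEF) e

lemma exists_extends_id (hEF : E ≤ F) : ∃ T : X →L[ℝ] F, ∀ x ∈ E, (T x : X) = x := by
  obtain ⟨π, hπ⟩ := Submodule.ClosedComplemented.of_finiteDimensional E
  exact ⟨(Submodule.inclusion hEF).toContinuousLinearMap ∘L π, fun x hx => by simp [hπ ⟨x, hx⟩]⟩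

lemma exists_traceRestrict_eq_one (hE : E ≠ ⊥) : ∃ S, traceRestrict hEF S = 1 := by
  obtain ⟨e, heE, he⟩ := (Submodule.ne_bot_iff E).1 hE
  obtain ⟨f, hf⟩ := SeparatingDual.exists_eq_one (R := ℝ) (x := (⟨e, hEF heE⟩ : F))
    (by simpa using he)
  exact ⟨f.smulRight ⟨e, heE⟩, by rw [traceRestrict_smulRight]; exact hf⟩

variable [FiniteDimensional ℝ F]

lemma traceRestrict_eq_trace_comp {T : X →L[ℝ] F} (hT : ∀ x ∈ E, (T x : X) = x)
    (S : F →L[ℝ] E) :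
    traceRestrict hEF S = LinearMap.trace ℝ F (T ∘L E.subtypeL ∘L S : F →L[ℝ] F) := by
  rw [traceRestrict_apply, ← LinearMap.trace_comp_comm']
  congr 1
  ext v
  simp [hT]

lemma one_le_opNorm_mul_nuclearNorm {T : X →L[ℝ] F} (hT : ∀ x ∈ E, (T x : X) = x)
    {S : F →L[ℝ] E} (hS : traceRestrict hEF S = 1) :
    1 ≤ ‖T‖ * nuclearNorm (E.subtypeL ∘L S) :=
  hS ▸ traceRestrict_eq_trace_comp hEF hT S ▸ trace_comp_le_opNorm_mul_nuclearNorm _ _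

lemma exists_extension_opNorm_le_inv {m : ℝ} (hm : 0 < m)
    (h : ∀ S, traceRestrict hEF S = 1 → m ≤ nuclearNorm (E.subtypeL ∘L S)) :
    ∃ T : X →L[ℝ] F, (∀ x ∈ E, (T x : X) = x) ∧ ‖T‖ ≤ m⁻¹ := by
  let J := (ContinuousLinearMap.compL ℝ F E X E.subtypeL).toLinearMap
  have hJ : Function.Injective J := fun S S' hSS' =>
    ContinuousLinearMap.ext fun v => Subtype.ext (DFunLike.congr_fun hSS' v)
  obtain ⟨Φ, hΦJ, hΦ⟩ := exists_extension_abs_le_of_injective hJ (m • traceRestrict hEF)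
    (nuclearSeminorm F X)
    (Seminorm.mul_le_of_forall_eq_one _ ((nuclearSeminorm F X).comp J) hm.le h)
  obtain ⟨T, hTm, hTΦ⟩ := exists_opNorm_le_of_abs_le_mul_nuclearNorm (m⁻¹ • Φ)
    (inv_nonneg.2 hm.le) fun A => by
      rw [LinearMap.smul_apply, smul_eq_mul, abs_mul, abs_inv, abs_of_pos hm]
      exact mul_le_mul_of_nonneg_left (hΦ A) (inv_nonneg.2 hm.le)
  refine ⟨T, fun x hx => ?_, hTm⟩
  suffices T x = ⟨x, hEF hx⟩ by rw [this]
  refine (SeparatingDual.eq_iff_forall_dual_eq (R := ℝ)).2 fun f => ?_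
  have hJx : J (f.smulRight ⟨x, hx⟩) = f.smulRight x := by ext; simp [J]
  rw [hTΦ, LinearMap.smul_apply, ← hJx, hΦJ, LinearMap.smul_apply, traceRestrict_smulRight,
    smul_eq_mul, smul_eq_mul, inv_mul_cancel_left₀ hm.ne']
  rfl

end Subspaces

theorem stmt_10_general (X : Type*) [NormedAddCommGroup X] [NormedSpace ℝ X]
    (E F : Submodule ℝ X) [FiniteDimensional ℝ E] [FiniteDimensional ℝ F]
    (hEF : E ≤ F) :
    sInf {c | ∃ T : X →L[ℝ] F, (∀ x : X, x ∈ E → (T x : X) = x) ∧ c = ‖T‖}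
      = (sInf {c | ∃ S : F →L[ℝ] E,
          LinearMap.trace ℝ E ((S : F →ₗ[ℝ] E).comp (Submodule.inclusion hEF)) = 1 ∧
          c = nuclearNorm (E.subtypeL.comp S)})⁻¹ := by
  rcases eq_or_ne E ⊥ with rfl | hE
  -- no `S` has trace one, and `sInf ∅ = 0` in `ℝ`; the zero operator makes the left side `0` too
  · simp only [← traceRestrict_apply, traceRestrict_eq_zero, zero_ne_one, false_and,
      exists_false, Set.ofPred_false, Real.sInf_empty, inv_zero]
    refine IsLeast.csInf_eq ⟨⟨0, fun x hx => ?_, (norm_zero (E := X →L[ℝ] F)).symm⟩, ?_⟩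
    · simp [(Submodule.mem_bot ℝ).1 hx]
    · rintro _ ⟨T, -, rfl⟩
      positivity
  obtain ⟨T₀, hT₀⟩ := exists_extends_id hEF
  obtain ⟨S₀, hS₀⟩ := exists_traceRestrict_eq_one hEF hE
  refine Real.sInf_eq_inv_sInf (by rintro _ ⟨T, -, rfl⟩; positivity) ⟨_, T₀, hT₀, rfl⟩
    ⟨_, S₀, hS₀, rfl⟩ ?_ fun m hm hB => ?_
  · rintro _ ⟨T, hT, rfl⟩ _ ⟨S, hS, rfl⟩
    exact one_le_opNorm_mul_nuclearNorm hEF hT hS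
  · obtain ⟨T, hT, hTm⟩ := exists_extension_opNorm_le_inv hEF hm fun S hS => hB _ ⟨S, hS, rfl⟩
    exact ⟨_, ⟨T, hT, rfl⟩, hTm⟩

theorem stmt_10 (X : Type*) [NormedAddCommGroup X] [NormedSpace ℝ X] [CompleteSpace X]
    (E F : Submodule ℝ X) [FiniteDimensional ℝ E] [FiniteDimensional ℝ F]
    (hEF : E ≤ F) :
    sInf {c | ∃ T : X →L[ℝ] F, (∀ x : X, x ∈ E → (T x : X) = x) ∧ c = ‖T‖}
      = (sInf {c | ∃ S : F →L[ℝ] E,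
          LinearMap.trace ℝ E ((S : F →ₗ[ℝ] E).comp (Submodule.inclusion hEF)) = 1 ∧
          c = nuclearNorm (E.subtypeL.comp S)})⁻¹ :=
  stmt_10_general X E F hEF
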